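/- Let ρ be a polymatroid on E and A ⊆ E. If B and B' are cyclic flats with ρ(A) = ρ(B) + Σ_{i ∈ A\B} ρ({i}) and ρ(A) = ρ(B') + Σ_{i ∈ A\B'} ρ({i}), then the cyclic flats cl_ρ(B ∪ B') and cy_ρ(B ∩ B') also satisfy this same minimizing equality for A. -/

import Mathlib

open Finset
open scoped Classical

variable {α : Type*}

def IsPolymatroid [DecidableEq α] (ρ : Finset α → ℝ) : Prop :=
  ρ ∅ = 0 ∧ (∀ A B : Finset α, A ⊆ B → ρ A ≤ ρ B) ∧
    (∀ A B : Finset α, ρ (A ∪ B) + ρ (A ∩ B) ≤ ρ A + ρ B)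

/-- `A` is a flat of the polymatroid `ρ` (ground set = all of `α`). -/
def PmFlat [DecidableEq α] (ρ : Finset α → ℝ) (A : Finset α) : Prop :=
  ∀ i : α, i ∉ A → ρ A < ρ (insert i A)

/-- `A` is a cyclic set of the polymatroid `ρ`. -/
def PmCyclic [DecidableEq α] (ρ : Finset α → ℝ) (A : Finset α) : Prop :=
  ∀ i ∈ A, 0 < ρ {i} → ρ A < ρ (A.erase i) + ρ {i}

/-- The closure of `A`: the set `{i : ρ(A ∪ {i}) = ρ(A)}`. -/
noncomputable def pmCl [DecidableEq α] [Fintype α] (ρ : Finset α → ℝ) (A : Finset α) :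
    Finset α :=
  Finset.univ.filter (fun i => ρ (insert i A) = ρ A)

/-- The maximum cyclic subset of `A`: the union of all cyclic subsets of `A`. -/
noncomputable def pmCy [DecidableEq α] (ρ : Finset α → ℝ) (A : Finset α) : Finset α :=
  (A.powerset.filter (fun D => PmCyclic ρ D)).sup id

/- For every `X`, `ρ A ≤ ρ X + ∑_{A \ X} ρ{i}` by subadditivity, and the right-hand side is
submodular in `X` because the sum is modular. Hence if `B` and `B'` both attain `ρ A`, so do
`B ∪ B'` and `B ∩ B'`. Passing to the closure of `B ∪ B'` keeps `ρ` and shrinks the sum, while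
passing to the cyclic part of `B ∩ B'` only removes elements whose rank adds up exactly
(`ρ X = ρ (cy X) + ∑_{X \ cy X} ρ{i}`), so neither step increases the bound. -/

section

variable [DecidableEq α]

/-- The paper's `R` is the set of cyclic flats `X` with `ρ A = rankBound ρ A X`. -/
def rankBound (ρ : Finset α → ℝ) (A X : Finset α) : ℝ :=
  ρ X + ∑ i ∈ A \ X, ρ {i}

lemma mem_pmCl [Fintype α] {ρ : Finset α → ℝ} {X : Finset α} {i : α} :
    i ∈ pmCl ρ X ↔ ρ (insert i X) = ρ X := by
  simp [pmCl]

lemma subset_pmCl [Fintype α] (ρ : Finset α → ℝ) (X : Finset α) : X ⊆ pmCl ρ X := by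
  intro i hi
  rw [mem_pmCl, insert_eq_self.2 hi]

lemma pmCy_subset (ρ : Finset α → ℝ) (X : Finset α) : pmCy ρ X ⊆ X := by
  intro a ha
  obtain ⟨D, hD, haD⟩ := mem_sup.1 ha
  exact mem_powerset.1 (mem_filter.1 hD).1 haD

lemma subset_pmCy {ρ : Finset α → ℝ} {D X : Finset α} (hDX : D ⊆ X) (hD : PmCyclic ρ D) :
    D ⊆ pmCy ρ X :=
  le_sup (f := id) (mem_filter.2 ⟨mem_powerset.2 hDX, hD⟩)

namespace IsPolymatroid

variable {ρ : Finset α → ℝ} (hρ : IsPolymatroid ρ)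
include hρ

lemma mono {X Y : Finset α} (h : X ⊆ Y) : ρ X ≤ ρ Y := hρ.2.1 X Y h

lemma submodular (X Y : Finset α) : ρ (X ∪ Y) + ρ (X ∩ Y) ≤ ρ X + ρ Y := hρ.2.2 X Y

lemma nonneg (X : Finset α) : 0 ≤ ρ X := hρ.1 ▸ hρ.mono (empty_subset X)

lemma insert_add_le_insert_add {X Y : Finset α} (hXY : X ⊆ Y) (i : α) :
    ρ (insert i Y) + ρ X ≤ ρ (insert i X) + ρ Y := by
  have hunion : insert i X ∪ Y = insert i Y := by
    rw [insert_union, union_eq_right.2 hXY]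
  have hinter : X ⊆ insert i X ∩ Y := subset_inter (subset_insert i X) hXY
  have := hρ.submodular (insert i X) Y
  rw [hunion] at this
  linarith [hρ.mono hinter]

lemma rank_insert_le (X : Finset α) (i : α) : ρ (insert i X) ≤ ρ X + ρ {i} := by
  have := hρ.submodular X {i}
  rw [union_singleton] at this
  linarith [hρ.nonneg (X ∩ {i})]

lemma rank_union_le_add_sum (X S : Finset α) : ρ (X ∪ S) ≤ ρ X + ∑ i ∈ S, ρ {i} := by
  induction S using Finset.induction_on with
  | empty => simp
  | insert a S ha ih =>
    rw [union_insert, sum_insert ha]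
    linarith [hρ.rank_insert_le (X ∪ S) a]

lemma rank_le_rankBound (A X : Finset α) : ρ A ≤ rankBound ρ A X := by
  have hA : A ⊆ X ∪ A \ X := by
    rw [union_sdiff_self_eq_union]
    exact subset_union_right
  exact (hρ.mono hA).trans (hρ.rank_union_le_add_sum X (A \ X))

lemma rankBound_union_add_inter_le (A X Y : Finset α) :
    rankBound ρ A (X ∪ Y) + rankBound ρ A (X ∩ Y) ≤ rankBound ρ A X + rankBound ρ A Y := by
  have hsum : ∑ i ∈ A \ (X ∪ Y), ρ {i} + ∑ i ∈ A \ (X ∩ Y), ρ {i} =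
      ∑ i ∈ A \ X, ρ {i} + ∑ i ∈ A \ Y, ρ {i} := by
    rw [sdiff_union_distrib, sdiff_inter_distrib_right, add_comm, sum_union_inter]
  unfold rankBound
  linarith [hρ.submodular X Y]

lemma eq_rankBound_union_inter {A X Y : Finset α} (hX : ρ A = rankBound ρ A X)
    (hY : ρ A = rankBound ρ A Y) :
    ρ A = rankBound ρ A (X ∪ Y) ∧ ρ A = rankBound ρ A (X ∩ Y) := by
  have := hρ.rankBound_union_add_inter_le A X Y
  have hunion := hρ.rank_le_rankBound A (X ∪ Y)
  have hinter := hρ.rank_le_rankBound A (X ∩ Y)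
  constructor <;> linarith

lemma lt_erase_add_of_pmCyclic {D Z : Finset α} (hD : PmCyclic ρ D) (hDZ : D ⊆ Z) {i : α}
    (hi : i ∈ D) (hpos : 0 < ρ {i}) : ρ Z < ρ (Z.erase i) + ρ {i} := by
  have := hρ.insert_add_le_insert_add (erase_subset_erase i hDZ) i
  rw [insert_erase (hDZ hi), insert_erase hi] at this
  linarith [hD i hi hpos]

lemma pmCyclic_union {D D' : Finset α} (hD : PmCyclic ρ D) (hD' : PmCyclic ρ D') :
    PmCyclic ρ (D ∪ D') := by
  intro i hi hpos
  rcases mem_union.1 hi with h | h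
  · exact hρ.lt_erase_add_of_pmCyclic hD subset_union_left h hpos
  · exact hρ.lt_erase_add_of_pmCyclic hD' subset_union_right h hpos

lemma pmFlat_inter {F F' : Finset α} (hF : PmFlat ρ F) (hF' : PmFlat ρ F') :
    PmFlat ρ (F ∩ F') := by
  intro i hi
  by_cases hiF : i ∈ F
  · have hiF' : i ∉ F' := fun h => hi (mem_inter.2 ⟨hiF, h⟩)
    linarith [hρ.insert_add_le_insert_add (inter_subset_right : F ∩ F' ⊆ F') i, hF' i hiF']
  · linarith [hρ.insert_add_le_insert_add (inter_subset_left : F ∩ F' ⊆ F) i, hF i hiF]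

section Closure

variable [Fintype α]

lemma rank_pmCl (X : Finset α) : ρ (pmCl ρ X) = ρ X := by
  suffices h : ∀ S : Finset α, S ⊆ pmCl ρ X → ρ (X ∪ S) = ρ X by
    rw [← h _ le_rfl, union_eq_right.2 (subset_pmCl ρ X)]
  intro S
  induction S using Finset.induction_on with
  | empty => simp
  | insert a S _ ih =>
    intro hS
    have hXS := ih ((subset_insert a S).trans hS)
    have ha := mem_pmCl.1 (hS (mem_insert_self a S))
    have hle := hρ.insert_add_le_insert_add (subset_union_left : X ⊆ X ∪ S) a
    have hge := hρ.mono ((subset_union_left : X ⊆ X ∪ S).trans (subset_insert a (X ∪ S)))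
    rw [union_insert]
    linarith

lemma pmFlat_pmCl (X : Finset α) : PmFlat ρ (pmCl ρ X) := by
  intro i hi
  have hlt : ρ X < ρ (insert i X) :=
    (hρ.mono (subset_insert i X)).lt_of_ne (Ne.symm (mt mem_pmCl.2 hi))
  rw [hρ.rank_pmCl]
  exact hlt.trans_le (hρ.mono (insert_subset_insert i (subset_pmCl ρ X)))

lemma pmCyclic_pmCl {D : Finset α} (hD : PmCyclic ρ D) : PmCyclic ρ (pmCl ρ D) := by
  intro i hi hpos
  by_cases hiD : i ∈ D
  · exact hρ.lt_erase_add_of_pmCyclic hD (subset_pmCl ρ D) hiD hpos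
  · have hDsub : D ⊆ (pmCl ρ D).erase i := subset_erase.2 ⟨subset_pmCl ρ D, hiD⟩
    have := hρ.insert_add_le_insert_add hDsub i
    rw [insert_erase hi, mem_pmCl.1 hi] at this
    linarith

lemma rankBound_pmCl_le (A X : Finset α) : rankBound ρ A (pmCl ρ X) ≤ rankBound ρ A X := by
  have hsum : ∑ i ∈ A \ pmCl ρ X, ρ {i} ≤ ∑ i ∈ A \ X, ρ {i} :=
    sum_le_sum_of_subset_of_nonneg (sdiff_subset_sdiff subset_rfl (subset_pmCl ρ X))
      fun i _ _ => hρ.nonneg {i}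
  unfold rankBound
  linarith [hρ.rank_pmCl X]

end Closure

section CyclicPart

lemma pmCyclic_pmCy (X : Finset α) : PmCyclic ρ (pmCy ρ X) := by
  apply sup_induction
  · intro i hi
    exact absurd hi (notMem_empty i)
  · intro D hD D' hD'
    exact hρ.pmCyclic_union hD hD'
  · intro D hD
    exact (mem_filter.1 hD).2

lemma notMem_pmCy_of_split {X : Finset α} {i : α} (hpos : 0 < ρ {i})
    (hsplit : ρ (X.erase i) + ρ {i} ≤ ρ X) : i ∉ pmCy ρ X := fun hi =>
  (hρ.lt_erase_add_of_pmCyclic (hρ.pmCyclic_pmCy X) (pmCy_subset ρ X) hi hpos).not_ge hsplit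

lemma pmCy_erase_of_notMem {X : Finset α} {i : α} (hi : i ∉ pmCy ρ X) :
    pmCy ρ (X.erase i) = pmCy ρ X := by
  apply subset_antisymm
  · exact subset_pmCy ((pmCy_subset ρ _).trans (erase_subset i X)) (hρ.pmCyclic_pmCy _)
  · exact subset_pmCy (subset_erase.2 ⟨pmCy_subset ρ X, hi⟩) (hρ.pmCyclic_pmCy X)

lemma rank_pmCy_add_sum_le (X : Finset α) :
    ρ (pmCy ρ X) + ∑ i ∈ X \ pmCy ρ X, ρ {i} ≤ ρ X := by
  induction X using Finset.strongInduction with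
  | _ X ih =>
    by_cases hX : PmCyclic ρ X
    · have hcy : pmCy ρ X = X := subset_antisymm (pmCy_subset ρ X) (subset_pmCy subset_rfl hX)
      simp [hcy]
    · obtain ⟨i, hiX, hpos, hsplit⟩ : ∃ i ∈ X, 0 < ρ {i} ∧ ρ (X.erase i) + ρ {i} ≤ ρ X := by
        simpa [PmCyclic] using hX
      have hi := hρ.notMem_pmCy_of_split hpos hsplit
      have hX' := ih (X.erase i) (erase_ssubset hiX)
      rw [hρ.pmCy_erase_of_notMem hi, erase_sdiff_comm] at hX'
      rw [← add_sum_erase _ _ (mem_sdiff.2 ⟨hiX, hi⟩)]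
      linarith

lemma rank_eq_rank_pmCy_add_sum (X : Finset α) :
    ρ X = ρ (pmCy ρ X) + ∑ i ∈ X \ pmCy ρ X, ρ {i} :=
  le_antisymm (hρ.rank_le_rankBound X (pmCy ρ X)) (hρ.rank_pmCy_add_sum_le X)

lemma pmFlat_pmCy {F : Finset α} (hF : PmFlat ρ F) : PmFlat ρ (pmCy ρ F) := by
  intro i hi
  by_cases hiF : i ∈ F
  · -- otherwise `insert i (pmCy ρ F)` would be a larger cyclic subset of `F`
    by_contra! hle
    have heq : ρ (insert i (pmCy ρ F)) = ρ (pmCy ρ F) :=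
      le_antisymm hle (hρ.mono (subset_insert i _))
    have hcyc : PmCyclic ρ (insert i (pmCy ρ F)) := by
      intro j hj hjpos
      rcases mem_insert.1 hj with rfl | hj
      · rw [erase_insert hi, heq]
        linarith
      · exact hρ.lt_erase_add_of_pmCyclic (hρ.pmCyclic_pmCy F) (subset_insert i _) hj hjpos
    exact hi (subset_pmCy (insert_subset hiF (pmCy_subset ρ F)) hcyc (mem_insert_self i _))
  · linarith [hρ.insert_add_le_insert_add (pmCy_subset ρ F) i, hF i hiF]

lemma rankBound_pmCy_le (A X : Finset α) : rankBound ρ A (pmCy ρ X) ≤ rankBound ρ A X := by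
  have hdisj : Disjoint (A \ X) (X \ pmCy ρ X) := sdiff_disjoint.mono_right sdiff_subset
  have hcover : A \ pmCy ρ X ⊆ (A \ X) ∪ (X \ pmCy ρ X) := by
    intro a ha
    by_cases haX : a ∈ X <;> simp_all
  have hsum : ∑ i ∈ A \ pmCy ρ X, ρ {i} ≤ ∑ i ∈ A \ X, ρ {i} + ∑ i ∈ X \ pmCy ρ X, ρ {i} := by
    rw [← sum_union hdisj]
    exact sum_le_sum_of_subset_of_nonneg hcover fun i _ _ => hρ.nonneg _
  unfold rankBound
  linarith [hρ.rank_eq_rank_pmCy_add_sum X]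

end CyclicPart

end IsPolymatroid

end

theorem join_meet_mem_R [DecidableEq α] [Fintype α]
    (ρ : Finset α → ℝ) (hρ : IsPolymatroid ρ) (A : Finset α) {B B' : Finset α}
    (hBflat : PmFlat ρ B) (hBcyc : PmCyclic ρ B)
    (hB'flat : PmFlat ρ B') (hB'cyc : PmCyclic ρ B')
    (hBeq : ρ A = ρ B + ∑ i ∈ A \ B, ρ {i})
    (hB'eq : ρ A = ρ B' + ∑ i ∈ A \ B', ρ {i}) :
    (PmFlat ρ (pmCl ρ (B ∪ B')) ∧ PmCyclic ρ (pmCl ρ (B ∪ B')) ∧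
      ρ A = ρ (pmCl ρ (B ∪ B')) + ∑ i ∈ A \ pmCl ρ (B ∪ B'), ρ {i}) ∧
    (PmFlat ρ (pmCy ρ (B ∩ B')) ∧ PmCyclic ρ (pmCy ρ (B ∩ B')) ∧
      ρ A = ρ (pmCy ρ (B ∩ B')) + ∑ i ∈ A \ pmCy ρ (B ∩ B'), ρ {i}) := by
  obtain ⟨hjoin, hmeet⟩ := hρ.eq_rankBound_union_inter hBeq hB'eq
  refine ⟨⟨hρ.pmFlat_pmCl _, hρ.pmCyclic_pmCl (hρ.pmCyclic_union hBcyc hB'cyc), ?_⟩,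
    ⟨hρ.pmFlat_pmCy (hρ.pmFlat_inter hBflat hB'flat), hρ.pmCyclic_pmCy _, ?_⟩⟩
  · exact (hρ.rank_le_rankBound _ _).antisymm ((hρ.rankBound_pmCl_le _ _).trans hjoin.ge)
  · exact (hρ.rank_le_rankBound _ _).antisymm ((hρ.rankBound_pmCy_le _ _).trans hmeet.ge)
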